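/- (Tate's identity.) Let F be a field and let a, b, t ∈ F with a ≠ b, t ≠ a, t ≠ b. Then in (⋀² F*) ⊗ ℚ one has (t−a) ∧ (t−b) = ((t−a)/(b−a)) ∧ (1 − (t−a)/(b−a)) + (t−a) ∧ (a−b) − (t−b) ∧ (b−a), i.e., this identity holds in the second exterior power of the multiplicative group F* up to torsion. -/

import Mathlib

open scoped TensorProduct

variable {F : Type*} [Field F]

/-- The wedge `a ∧ b` of two units of a field `F`, viewed inside the exterior algebra over `ℤ`
of the multiplicative group `F*` (written additively); the degree-two part of this
exterior algebra is `⋀² F*`. -/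
noncomputable def wedgeUnits (a b : Fˣ) : ExteriorAlgebra ℤ (Additive Fˣ) :=
  ExteriorAlgebra.ι ℤ (Additive.ofMul a) * ExteriorAlgebra.ι ℤ (Additive.ofMul b)

/-!
Put `x = t - a`, `y = t - b`, `c = b - a`. The units on the right are `x / c`, `-(y / c)` and
`-c`, so by bilinearity and antisymmetry the right side expands to `x ∧ y` plus wedges with `-1`,
`c ∧ c` and `y ∧ c + c ∧ y`. The last two vanish, and `-1` is `2`-torsion, so its wedges die
after tensoring with `ℚ`.
-/

namespace ExteriorAlgebra

section CommGroup

variable {G : Type*} [CommGroup G]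

noncomputable def wedgeRat (a b : G) : ExteriorAlgebra ℤ (Additive G) ⊗[ℤ] ℚ :=
  (ι ℤ (Additive.ofMul a) * ι ℤ (Additive.ofMul b)) ⊗ₜ[ℤ] (1 : ℚ)

theorem wedgeRat_mul_left (a b c : G) : wedgeRat (a * b) c = wedgeRat a c + wedgeRat b c := by
  rw [wedgeRat, ofMul_mul, map_add, add_mul, TensorProduct.add_tmul, wedgeRat, wedgeRat]

theorem wedgeRat_mul_right (a b c : G) : wedgeRat a (b * c) = wedgeRat a b + wedgeRat a c := by
  rw [wedgeRat, ofMul_mul, map_add, mul_add, TensorProduct.add_tmul, wedgeRat, wedgeRat]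

theorem wedgeRat_inv_left (a b : G) : wedgeRat a⁻¹ b = -wedgeRat a b := by
  rw [wedgeRat, ofMul_inv, map_neg, neg_mul, TensorProduct.neg_tmul, wedgeRat]

theorem wedgeRat_inv_right (a b : G) : wedgeRat a b⁻¹ = -wedgeRat a b := by
  rw [wedgeRat, ofMul_inv, map_neg, mul_neg, TensorProduct.neg_tmul, wedgeRat]

theorem wedgeRat_self (a : G) : wedgeRat a a = 0 := by
  rw [wedgeRat, ι_sq_zero, TensorProduct.zero_tmul]

theorem wedgeRat_comm (a b : G) : wedgeRat b a = -wedgeRat a b := by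
  rw [wedgeRat, wedgeRat, ← TensorProduct.neg_tmul,
    eq_neg_of_add_eq_zero_left (ι_add_mul_swap (Additive.ofMul b) (Additive.ofMul a))]

theorem wedgeRat_eq_zero_of_pow_eq_one_left {a : G} {n : ℕ} (hn : n ≠ 0) (ha : a ^ n = 1)
    (b : G) : wedgeRat a b = 0 := by
  have htors : (n : ℤ) • (ι ℤ (Additive.ofMul a) * ι ℤ (Additive.ofMul b)) = 0 := by
    rw [← smul_mul_assoc, ← map_zsmul, natCast_zsmul, ← ofMul_pow, ha, ofMul_one, map_zero,
      zero_mul]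
  have hone : (1 : ℚ) = (n : ℤ) • (n : ℚ)⁻¹ := by
    rw [zsmul_eq_mul, Int.cast_natCast, mul_inv_cancel₀ (Nat.cast_ne_zero.mpr hn)]
  rw [wedgeRat, hone, TensorProduct.tmul_smul, TensorProduct.smul_tmul', htors,
    TensorProduct.zero_tmul]

theorem wedgeRat_eq_zero_of_pow_eq_one_right {b : G} {n : ℕ} (hn : n ≠ 0) (hb : b ^ n = 1)
    (a : G) : wedgeRat a b = 0 := by
  rw [← neg_neg (wedgeRat a b), ← wedgeRat_comm, wedgeRat_eq_zero_of_pow_eq_one_left hn hb,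
    neg_zero]

theorem wedgeRat_tate {ε : G} (hε : ε ^ 2 = 1) (x y c : G) :
    wedgeRat x y = wedgeRat (x / c) (ε * (y / c)) + wedgeRat x (ε * c) - wedgeRat y c := by
  simp only [div_eq_mul_inv, wedgeRat_mul_left, wedgeRat_mul_right, wedgeRat_inv_left,
    wedgeRat_inv_right, wedgeRat_eq_zero_of_pow_eq_one_right two_ne_zero hε, wedgeRat_self,
    wedgeRat_comm c y]
  abel

end CommGroup

end ExteriorAlgebra

theorem wedgeUnits_tmul_one (a b : Fˣ) :
    wedgeUnits a b ⊗ₜ[ℤ] (1 : ℚ) = ExteriorAlgebra.wedgeRat a b :=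
  rfl

/-- Tate's identity: for `a, b, t` in a field `F` with `a ≠ b`, `t ≠ a`, `t ≠ b`, one has
`(t−a) ∧ (t−b) = ((t−a)/(b−a)) ∧ (1 − (t−a)/(b−a)) + (t−a) ∧ (a−b) − (t−b) ∧ (b−a)`
in `(⋀² F*) ⊗ ℚ` (i.e. up to torsion). -/
theorem tate_identity (a b t : F) (hab : a ≠ b) (hta : t ≠ a) (htb : t ≠ b) :
    (wedgeUnits (Units.mk0 (t - a) (sub_ne_zero_of_ne hta))
        (Units.mk0 (t - b) (sub_ne_zero_of_ne htb)) ⊗ₜ[ℤ] (1 : ℚ)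
      : ExteriorAlgebra ℤ (Additive Fˣ) ⊗[ℤ] ℚ) =
    (wedgeUnits
        (Units.mk0 ((t - a) / (b - a))
          (div_ne_zero (sub_ne_zero_of_ne hta) (sub_ne_zero_of_ne (Ne.symm hab))))
        (Units.mk0 (1 - (t - a) / (b - a)) (by
          have hba : b - a ≠ 0 := sub_ne_zero_of_ne (Ne.symm hab)
          have : 1 - (t - a) / (b - a) = (b - t) / (b - a) := by
            field_simp
            ring
          rw [this]
          exact div_ne_zero (sub_ne_zero_of_ne (Ne.symm htb)) hba)) +
      wedgeUnits (Units.mk0 (t - a) (sub_ne_zero_of_ne hta))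
        (Units.mk0 (a - b) (sub_ne_zero_of_ne hab)) -
      wedgeUnits (Units.mk0 (t - b) (sub_ne_zero_of_ne htb))
        (Units.mk0 (b - a) (sub_ne_zero_of_ne (Ne.symm hab)))) ⊗ₜ[ℤ] (1 : ℚ) := by
  set x := Units.mk0 (t - a) (sub_ne_zero_of_ne hta)
  set y := Units.mk0 (t - b) (sub_ne_zero_of_ne htb)
  set c := Units.mk0 (b - a) (sub_ne_zero_of_ne (Ne.symm hab))
  have hratio : ∀ h, Units.mk0 ((t - a) / (b - a)) h = x / c := fun _ => by
    ext
    simp [x, c]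
  have hcomplement : ∀ h, Units.mk0 (1 - (t - a) / (b - a)) h = -1 * (y / c) := fun _ => by
    ext
    simp only [Units.val_mk0, Units.val_mul, Units.val_div_eq_div_val, Units.val_neg,
      Units.val_one, y, c]
    field_simp
    ring
  have hneg : Units.mk0 (a - b) (sub_ne_zero_of_ne hab) = -1 * c := by
    ext
    simp [c]
  rw [hratio, hcomplement, hneg, TensorProduct.sub_tmul, TensorProduct.add_tmul]
  simp only [wedgeUnits_tmul_one]
  exact ExteriorAlgebra.wedgeRat_tate (by norm_num) x y c
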